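/- arXiv:2410.14918 — 5 statements merged into one kernel-verified Lean document; each statement's English description precedes it below -/
import Mathlib

section
/- Let U, W be symmetric positive definite matrices (of sizes m×m and n×n) and V an n×m real matrix. Set S = -W^{-1/2} V U^{-1} Vᵀ W^{-1/2} with symmetric Schur (spectral) decomposition S = Q Λ Qᵀ, where Q is orthogonal and Λ diagonal with all diagonal entries nonzero (i.e., V U^{-1}Vᵀ invertible). Define X = U^{-1} Vᵀ W^{-1/2} Q Λ^{-1} and Y = [[I, X],[0, W^{-1/2} Q]]. Then Y is invertible with Y^{-1} = [[I, -X Qᵀ W^{1/2}],[0, Qᵀ W^{1/2}]], and Y · diag(I, I+Λ) · Y^{-1} = [[I, U^{-1}Vᵀ],[0, I - W^{-1} V U^{-1} Vᵀ]]. In particular, the block upper-triangular matrix [[I, U^{-1}Vᵀ],[0, I - W^{-1}V U^{-1}Vᵀ]] is diagonalizable. -/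
open Matrix

/-!
With `s = W^{1/2}`, the matrices `P = s⁻¹ Q` and `P' = Qᵀ s` are mutually inverse, and
`Y = [[1, X], [0, P]]` is inverted by `[[1, -X P'], [0, P']]`. Conjugating `diag(1, 1 + Λ)` by `Y`
gives `[[1, X Λ P'], [0, 1 + P Λ P']]`; here `X Λ P' = U⁻¹ Vᵀ` since `Λ` cancels against the `Λ⁻¹`
in `X`, and `P Λ P' = s⁻¹ (Q Λ Qᵀ) s = -W⁻¹ V U⁻¹ Vᵀ` by the spectral decomposition of `S`.
-/

/-- The square root of a positive semidefinite matrix, as defined in the older Mathlib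
(`Matrix.PosSemidef.sqrt`, removed since). -/
noncomputable def Matrix.PosSemidef.sqrt {n : Type*} [Fintype n] [DecidableEq n] {𝕜 : Type*}
    [RCLike 𝕜] [PartialOrder 𝕜] {A : Matrix n n 𝕜} (hA : A.PosSemidef) : Matrix n n 𝕜 :=
  hA.1.eigenvectorUnitary.1 * diagonal ((↑) ∘ (√·) ∘ hA.1.eigenvalues) *
    (star hA.1.eigenvectorUnitary : Matrix n n 𝕜)

namespace Matrix

section Blocks

variable {m n α : Type*} [Fintype m] [Fintype n] [DecidableEq m] [DecidableEq n] [Ring α]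
  {X : Matrix m n α} {P P' : Matrix n n α}

theorem fromBlocks_one_mul_fromBlocks_neg_eq_one (h : P * P' = 1) :
    fromBlocks 1 X (0 : Matrix n m α) P * fromBlocks 1 (-(X * P')) (0 : Matrix n m α) P' = 1 := by
  simp [fromBlocks_multiply, h]

theorem fromBlocks_one_neg_mul_fromBlocks_eq_one (h : P' * P = 1) :
    fromBlocks 1 (-(X * P')) (0 : Matrix n m α) P' * fromBlocks 1 X (0 : Matrix n m α) P = 1 := by
  simp [fromBlocks_multiply, Matrix.mul_assoc, h]

theorem fromBlocks_conj_fromBlocks_one_add (D : Matrix n n α) (h : P * P' = 1) :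
    fromBlocks 1 X (0 : Matrix n m α) P * fromBlocks 1 0 (0 : Matrix n m α) (1 + D) * fromBlocks 1 (-(X * P')) (0 : Matrix n m α) P' =
      fromBlocks 1 (X * D * P') (0 : Matrix n m α) (1 + P * D * P') := by
  simp only [fromBlocks_multiply, Matrix.mul_add, Matrix.add_mul, Matrix.mul_one, Matrix.one_mul,
    Matrix.mul_zero, Matrix.zero_mul, add_zero, zero_add, h]
  congr 1
  abel

end Blocks

namespace PosSemidef

variable {n : Type*} [Fintype n] [DecidableEq n] {A : Matrix n n ℝ}

theorem sqrt_mul_self (hA : A.PosSemidef) : hA.sqrt * hA.sqrt = A := by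
  have hUU : (star hA.1.eigenvectorUnitary : Matrix n n ℝ) * hA.1.eigenvectorUnitary.1 = 1 :=
    Unitary.coe_star_mul_self _
  conv_rhs => rw [hA.1.spectral_theorem, Unitary.conjStarAlgAut_apply]
  unfold Matrix.PosSemidef.sqrt
  simp only [Matrix.mul_assoc]
  rw [← Matrix.mul_assoc (star hA.1.eigenvectorUnitary : Matrix n n ℝ), hUU, Matrix.one_mul,
    ← Matrix.mul_assoc (diagonal _), diagonal_mul_diagonal]
  congr 3
  funext i
  simp [Real.mul_self_sqrt (hA.eigenvalues_nonneg i)]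

end PosSemidef

namespace PosDef

variable {n : Type*} [Fintype n] [DecidableEq n] {A : Matrix n n ℝ}

theorem isUnit_det_sqrt (hA : A.PosDef) : IsUnit hA.posSemidef.sqrt.det := by
  have h : IsUnit (hA.posSemidef.sqrt.det * hA.posSemidef.sqrt.det) := by
    rw [← det_mul, hA.posSemidef.sqrt_mul_self]
    exact hA.isUnit.map detMonoidHom
  exact isUnit_of_mul_isUnit_left h

theorem inv_eq_sqrt_inv_mul_sqrt_inv (hA : A.PosDef) :
    A⁻¹ = hA.posSemidef.sqrt⁻¹ * hA.posSemidef.sqrt⁻¹ := by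
  conv_lhs => rw [← hA.posSemidef.sqrt_mul_self]
  exact Matrix.mul_inv_rev _ _

end PosDef

end Matrix

theorem stmt3_general {m n : ℕ} (U : Matrix (Fin m) (Fin m) ℝ)
    (V : Matrix (Fin n) (Fin m) ℝ) (W : Matrix (Fin n) (Fin n) ℝ)
    (hW : W.PosDef)
    (Q : Matrix (Fin n) (Fin n) ℝ) (hQ : Qᵀ * Q = 1 ∧ Q * Qᵀ = 1)
    (d : Fin n → ℝ) (hd : ∀ i, d i ≠ 0)
    (hQd : Q * diagonal d * Qᵀ =
      -(hW.posSemidef.sqrt⁻¹ * V * U⁻¹ * Vᵀ * hW.posSemidef.sqrt⁻¹))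
    (X : Matrix (Fin m) (Fin n) ℝ)
    (hX : X = U⁻¹ * Vᵀ * hW.posSemidef.sqrt⁻¹ * Q * (diagonal d)⁻¹)
    (Y Yinv : Matrix (Fin m ⊕ Fin n) (Fin m ⊕ Fin n) ℝ)
    (hY : Y = fromBlocks 1 X 0 (hW.posSemidef.sqrt⁻¹ * Q))
    (hYinv : Yinv = fromBlocks 1 (-(X * Qᵀ * hW.posSemidef.sqrt)) 0
      (Qᵀ * hW.posSemidef.sqrt)) :
    Y * Yinv = 1 ∧ Yinv * Y = 1 ∧
    Y * fromBlocks 1 0 0 (1 + diagonal d) * Yinv =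
      fromBlocks 1 (U⁻¹ * Vᵀ) 0 (1 - W⁻¹ * V * U⁻¹ * Vᵀ) := by
  obtain ⟨hQQ, hQQ'⟩ := hQ
  set s := hW.posSemidef.sqrt
  have hs : s⁻¹ * s = 1 := nonsing_inv_mul s hW.isUnit_det_sqrt
  have hs' : s * s⁻¹ = 1 := mul_nonsing_inv s hW.isUnit_det_sqrt
  have hΛ : (diagonal d)⁻¹ * diagonal d = 1 :=
    nonsing_inv_mul _ (by simp [det_diagonal, Finset.prod_ne_zero_iff, hd])
  have hPP' : s⁻¹ * Q * (Qᵀ * s) = 1 := by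
    rw [Matrix.mul_assoc, ← Matrix.mul_assoc Q, hQQ', Matrix.one_mul, hs]
  have hP'P : Qᵀ * s * (s⁻¹ * Q) = 1 := by
    rw [Matrix.mul_assoc, ← Matrix.mul_assoc s, hs', Matrix.one_mul, hQQ]
  have hXΛP' : X * diagonal d * (Qᵀ * s) = U⁻¹ * Vᵀ := by
    calc X * diagonal d * (Qᵀ * s)
        = U⁻¹ * Vᵀ * (s⁻¹ * Q * ((diagonal d)⁻¹ * diagonal d) * (Qᵀ * s)) := by
          simp only [hX, Matrix.mul_assoc]
      _ = U⁻¹ * Vᵀ := by rw [hΛ, Matrix.mul_one, hPP', Matrix.mul_one]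
  have hPΛP' : s⁻¹ * Q * diagonal d * (Qᵀ * s) = -(W⁻¹ * V * U⁻¹ * Vᵀ) := by
    calc s⁻¹ * Q * diagonal d * (Qᵀ * s) = s⁻¹ * (Q * diagonal d * Qᵀ) * s := by
          simp only [Matrix.mul_assoc]
      _ = -(W⁻¹ * V * U⁻¹ * Vᵀ) := by
          rw [hQd, show W⁻¹ = s⁻¹ * s⁻¹ from hW.inv_eq_sqrt_inv_mul_sqrt_inv]
          simp only [Matrix.neg_mul, Matrix.mul_neg, Matrix.mul_assoc, hs, Matrix.mul_one]
  have hYinv' : Yinv = fromBlocks 1 (-(X * (Qᵀ * s))) 0 (Qᵀ * s) := by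
    rw [hYinv, Matrix.mul_assoc]
  subst hY hYinv'
  refine ⟨fromBlocks_one_mul_fromBlocks_neg_eq_one hPP',
    fromBlocks_one_neg_mul_fromBlocks_eq_one hP'P, ?_⟩
  rw [fromBlocks_conj_fromBlocks_one_add _ hPP', hXΛP', hPΛP', sub_eq_add_neg]

/-- Diagonalizability of the block Gauss-Seidel preconditioned matrix: with `U`, `W`
symmetric positive definite, `S = -W^{-1/2} V U⁻¹ Vᵀ W^{-1/2} = Q Λ Qᵀ` a spectral
decomposition with `Q` orthogonal and `Λ = diagonal d` invertible,
`X = U⁻¹ Vᵀ W^{-1/2} Q Λ⁻¹` and `Y = [[I, X],[0, W^{-1/2} Q]]`, the matrix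
`Y⁻¹ = [[I, -X Qᵀ W^{1/2}],[0, Qᵀ W^{1/2}]]` is a two-sided inverse of `Y` and
`Y ⬝ diag(I, I+Λ) ⬝ Y⁻¹ = [[I, U⁻¹Vᵀ],[0, I - W⁻¹ V U⁻¹ Vᵀ]]`; in particular the
latter block upper-triangular matrix is diagonalizable. -/
theorem stmt3 {m n : ℕ} (U : Matrix (Fin m) (Fin m) ℝ)
    (V : Matrix (Fin n) (Fin m) ℝ) (W : Matrix (Fin n) (Fin n) ℝ)
    (hU : U.PosDef) (hW : W.PosDef)
    (Q : Matrix (Fin n) (Fin n) ℝ) (hQ : Qᵀ * Q = 1 ∧ Q * Qᵀ = 1)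
    (d : Fin n → ℝ) (hd : ∀ i, d i ≠ 0)
    (hQd : Q * diagonal d * Qᵀ =
      -(hW.posSemidef.sqrt⁻¹ * V * U⁻¹ * Vᵀ * hW.posSemidef.sqrt⁻¹))
    (X : Matrix (Fin m) (Fin n) ℝ)
    (hX : X = U⁻¹ * Vᵀ * hW.posSemidef.sqrt⁻¹ * Q * (diagonal d)⁻¹)
    (Y Yinv : Matrix (Fin m ⊕ Fin n) (Fin m ⊕ Fin n) ℝ)
    (hY : Y = fromBlocks 1 X 0 (hW.posSemidef.sqrt⁻¹ * Q))
    (hYinv : Yinv = fromBlocks 1 (-(X * Qᵀ * hW.posSemidef.sqrt)) 0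
      (Qᵀ * hW.posSemidef.sqrt)) :
    Y * Yinv = 1 ∧ Yinv * Y = 1 ∧
    Y * fromBlocks 1 0 0 (1 + diagonal d) * Yinv =
      fromBlocks 1 (U⁻¹ * Vᵀ) 0 (1 - W⁻¹ * V * U⁻¹ * Vᵀ) :=
  stmt3_general U V W hW Q hQ d hd hQd X hX Y Yinv hY hYinv
end

section
/- Let A be a block 3×3 saddle-point matrix A = [[H, 0, Jᵤᵀ],[0, W, J_ρᵀ],[Jᵤ, J_ρ, 0]] with Jᵤ invertible, and let à = [[H, 0, Jᵤᵀ],[0, W, J_ρᵀ],[Jᵤ, 0, 0]] be the block Gauss-Seidel preconditioner. Assume H is symmetric positive semidefinite, W is symmetric positive definite. Then every eigenvalue λ of Ã^{-1}A is real and satisfies λ ≥ 1; moreover there are at least 2·nᵤ eigenvalues (counted with algebraic multiplicity) equal to 1, where nᵤ is the size of the blocks H and Jᵤ, and the remaining eigenvalues are 1 + λ_j(W^{-1} Ĥ_d) where Ĥ_d = (Jᵤ^{-1}J_ρ)ᵀ H (Jᵤ^{-1}J_ρ). -/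
/-!
Block forward substitution gives `Ã⁻¹ A = [[1, G, 0], [0, 1 + W⁻¹ Ĥ_d, 0], [0, R, 1]]` with
`G = Jᵤ⁻¹ J_ρ` and `R = -Jᵤ⁻ᵀ H G`, so the characteristic polynomial of `Ã⁻¹ A` is
`(X - 1) ^ (2 nᵤ)` times that of `1 + W⁻¹ Ĥ_d`. If `W⁻¹ Ĥ_d v = ν v` with `v ≠ 0` then
`v* Ĥ_d v = ν (v* W v)`, and since `v* Ĥ_d v ≥ 0` and `v* W v > 0`, the eigenvalue `ν` is real
and nonnegative.
-/

open Matrix Polynomial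
open scoped ComplexOrder

namespace Matrix

variable {m n p : Type*} [Fintype m] [Fintype n] [Fintype p]
  [DecidableEq m] [DecidableEq n] [DecidableEq p]

theorem charpoly_map_ofReal (M : Matrix n n ℝ) :
    (M.map Complex.ofReal).charpoly = M.charpoly.map Complex.ofRealHom :=
  M.charpoly_map Complex.ofRealHom

theorem PosSemidef.map_ofReal {S : Matrix n n ℝ} (hS : S.PosSemidef) :
    (S.map Complex.ofReal).PosSemidef := by
  open scoped MatrixOrder in
  obtain ⟨B, rfl⟩ := CStarAlgebra.nonneg_iff_eq_star_mul_self.mp hS.nonneg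
  have hmap : (star B * B).map Complex.ofReal =
      (B.map Complex.ofReal)ᴴ * B.map Complex.ofReal := by
    rw [← conjTranspose_map _ fun x => (Complex.conj_ofReal x).symm]
    exact Matrix.map_mul (f := Complex.ofRealHom)
  rw [hmap]
  exact posSemidef_conjTranspose_mul_self _

theorem PosDef.map_ofReal {W : Matrix n n ℝ} (hW : W.PosDef) :
    (W.map Complex.ofReal).PosDef := by
  refine hW.posSemidef.map_ofReal.posDef_iff_det_ne_zero.mpr ?_
  rw [show (W.map Complex.ofReal).det = W.det from (Complex.ofRealHom.map_det W).symm]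
  exact Complex.ofReal_ne_zero.mpr hW.det_pos.ne'

theorem ofReal_mem_spectrum_map_ofReal_iff {M : Matrix n n ℝ} {r : ℝ} :
    (r : ℂ) ∈ spectrum ℂ (M.map Complex.ofReal) ↔ r ∈ spectrum ℝ M := by
  rw [mem_spectrum_iff_isRoot_charpoly, mem_spectrum_iff_isRoot_charpoly, charpoly_map_ofReal,
    ← Complex.ofRealHom_eq_coe, isRoot_map_iff Complex.ofRealHom.injective]

theorem PosDef.nonneg_of_mem_spectrum_of_mul_eq {W S M : Matrix n n ℂ} (hW : W.PosDef)
    (hS : S.PosSemidef) (hWM : W * M = S) {μ : ℂ} (hμ : μ ∈ spectrum ℂ M) : 0 ≤ μ := by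
  rw [← spectrum_toLin', ← Module.End.hasEigenvalue_iff_mem_spectrum] at hμ
  obtain ⟨v, hv⟩ := hμ.exists_hasEigenvector
  have hMv : M *ᵥ v = μ • v := by simpa using hv.apply_eq_smul
  have hWv := hW.dotProduct_mulVec_pos hv.2
  have hSv : star v ⬝ᵥ S *ᵥ v = μ * (star v ⬝ᵥ W *ᵥ v) := by
    rw [← hWM, ← mulVec_mulVec, hMv, mulVec_smul, dotProduct_smul, smul_eq_mul]
  rw [eq_div_of_mul_eq hWv.ne' hSv.symm]
  exact div_nonneg (hS.dotProduct_mulVec_nonneg v) hWv.le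

theorem PosDef.exists_nonneg_of_mem_spectrum_map_ofReal {W S M : Matrix n n ℝ} (hW : W.PosDef)
    (hS : S.PosSemidef) (hWM : W * M = S) {μ : ℂ}
    (hμ : μ ∈ spectrum ℂ (M.map Complex.ofReal)) : ∃ ν ∈ spectrum ℝ M, 0 ≤ ν ∧ μ = ν := by
  have hμ0 : 0 ≤ μ := hW.map_ofReal.nonneg_of_mem_spectrum_of_mul_eq hS.map_ofReal
    (by rw [← hWM]; exact (Matrix.map_mul (f := Complex.ofRealHom)).symm) hμ
  have hμre : μ = μ.re := Complex.eq_re_of_ofReal_le (r := 0) (by simpa using hμ0)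
  refine ⟨μ.re, ?_, (Complex.nonneg_iff.mp hμ0).1, hμre⟩
  rwa [← ofReal_mem_spectrum_map_ofReal_iff, ← hμre]

theorem mem_spectrum_of_charpoly_eq_mul {K : Type*} [Field K] {P : Matrix n n K}
    {Q : Matrix m m K} {k : ℕ} (h : P.charpoly = (X - 1) ^ k * Q.charpoly) {μ : K}
    (hμ : μ ∈ spectrum K P) : μ = 1 ∨ μ ∈ spectrum K Q := by
  rw [mem_spectrum_iff_isRoot_charpoly, h, IsRoot, eval_mul, mul_eq_zero, eval_pow,
    pow_eq_zero_iff', eval_sub, eval_X, eval_one, sub_eq_zero] at hμ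
  rcases hμ with ⟨h1, -⟩ | hQ
  · exact .inl h1
  · exact .inr (mem_spectrum_iff_isRoot_charpoly.mpr hQ)

theorem charpoly_fromBlocks_one {R : Type*} [CommRing R] (B : Matrix n n R)
    (G : Matrix m n R) (C : Matrix p (m ⊕ n) R) :
    (fromBlocks (fromBlocks 1 G 0 B) 0 C 1).charpoly =
      (X - 1) ^ (Fintype.card m + Fintype.card p) * B.charpoly := by
  rw [charpoly_fromBlocks_zero₁₂, charpoly_fromBlocks_zero₂₁, charpoly_one, charpoly_one, pow_add]
  ring

end Matrix

section GaussSeidel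

variable {m n α : Type*} [Fintype m] [Fintype n] [DecidableEq m] [DecidableEq n] [CommRing α]
  (H Ju : Matrix m m α) (W : Matrix n n α) (Jρ : Matrix m n α)

theorem isUnit_det_gaussSeidel (hJu : IsUnit Ju.det) (hW : IsUnit W.det) :
    IsUnit (fromBlocks (fromBlocks H 0 0 W) (fromRows Juᵀ Jρᵀ) (fromCols Ju 0) 0).det := by
  have hJut : IsUnit Juᵀ.det := by rwa [det_transpose]
  -- the inverse solves `Ju x = c`, then `Juᵀ z = a - H x`, then `W y = b - Jρᵀ z`
  refine isUnit_det_of_right_inverse (B := fromBlocks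
    (fromBlocks 0 0 (-(W⁻¹ * Jρᵀ * Juᵀ⁻¹)) W⁻¹) (fromRows Ju⁻¹ (W⁻¹ * Jρᵀ * Juᵀ⁻¹ * H * Ju⁻¹))
    (fromCols Juᵀ⁻¹ 0) (-(Juᵀ⁻¹ * H * Ju⁻¹))) ?_
  simp only [fromBlocks_multiply, fromRows_mul_fromCols, fromCols_mul_fromBlocks,
    fromBlocks_mul_fromRows, fromCols_mul_fromRows]
  simp [← fromBlocks_one, fromBlocks_add, Matrix.mul_assoc, add_eq_zero_iff_eq_neg,
    mul_nonsing_inv _ hJu, mul_nonsing_inv _ hJut, mul_nonsing_inv_cancel_left _ _ hJut,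
    mul_nonsing_inv_cancel_left _ _ hW, mul_nonsing_inv _ hW]

theorem gaussSeidel_mul_eq_saddlePoint (hJu : IsUnit Ju.det) (hW : IsUnit W.det) :
    fromBlocks (fromBlocks H 0 0 W) (fromRows Juᵀ Jρᵀ) (fromCols Ju 0) 0 *
      fromBlocks (fromBlocks 1 (Ju⁻¹ * Jρ) 0 (1 + W⁻¹ * ((Ju⁻¹ * Jρ)ᵀ * H * (Ju⁻¹ * Jρ)))) 0
        (fromCols 0 (-(Juᵀ⁻¹ * H * (Ju⁻¹ * Jρ)))) 1 =
      fromBlocks (fromBlocks H 0 0 W) (fromRows Juᵀ Jρᵀ) (fromCols Ju Jρ) 0 := by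
  have hJut : IsUnit Juᵀ.det := by rwa [det_transpose]
  simp only [fromBlocks_multiply, fromRows_mul_fromCols, fromCols_mul_fromBlocks]
  simp [fromBlocks_add, Matrix.mul_assoc, Matrix.mul_add, mul_nonsing_inv_cancel_left _ _ hJu,
    mul_nonsing_inv_cancel_left _ _ hJut, mul_nonsing_inv_cancel_left _ _ hW, transpose_nonsing_inv]

theorem gaussSeidel_inv_mul_saddlePoint (hJu : IsUnit Ju.det) (hW : IsUnit W.det) :
    (fromBlocks (fromBlocks H 0 0 W) (fromRows Juᵀ Jρᵀ) (fromCols Ju 0) 0)⁻¹ *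
      fromBlocks (fromBlocks H 0 0 W) (fromRows Juᵀ Jρᵀ) (fromCols Ju Jρ) 0 =
      fromBlocks (fromBlocks 1 (Ju⁻¹ * Jρ) 0 (1 + W⁻¹ * ((Ju⁻¹ * Jρ)ᵀ * H * (Ju⁻¹ * Jρ)))) 0
        (fromCols 0 (-(Juᵀ⁻¹ * H * (Ju⁻¹ * Jρ)))) 1 := by
  rw [← gaussSeidel_mul_eq_saddlePoint H Ju W Jρ hJu hW, ← Matrix.mul_assoc,
    nonsing_inv_mul _ (isUnit_det_gaussSeidel H Ju W Jρ hJu hW), Matrix.one_mul]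

end GaussSeidel

/-- Spectrum of the block Gauss-Seidel preconditioned IP-Gauss-Newton matrix: with
`A = [[H,0,Jᵤᵀ],[0,W,J_ρᵀ],[Jᵤ,J_ρ,0]]`, `At = [[H,0,Jᵤᵀ],[0,W,J_ρᵀ],[Jᵤ,0,0]]`,
`Jᵤ` invertible, `H` symmetric positive semidefinite and `W` symmetric positive
definite: every eigenvalue of `At⁻¹A` is real and `≥ 1`; the eigenvalue `1` has
algebraic multiplicity at least `2nᵤ`; and every eigenvalue is either `1` or of the
form `1 + ν` with `ν` an eigenvalue of `W⁻¹ Ĥ_d`, `Ĥ_d = (Jᵤ⁻¹J_ρ)ᵀ H (Jᵤ⁻¹J_ρ)`. -/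
theorem stmt5 {nu nρ : ℕ}
    (H Ju : Matrix (Fin nu) (Fin nu) ℝ) (W : Matrix (Fin nρ) (Fin nρ) ℝ)
    (Jρ : Matrix (Fin nu) (Fin nρ) ℝ)
    (hH : H.PosSemidef) (hW : W.PosDef) (hJu : IsUnit Ju.det)
    (A At : Matrix ((Fin nu ⊕ Fin nρ) ⊕ Fin nu) ((Fin nu ⊕ Fin nρ) ⊕ Fin nu) ℝ)
    (hA : A = fromBlocks (fromBlocks H 0 0 W) (fromRows Juᵀ Jρᵀ) (fromCols Ju Jρ) 0)
    (hAt : At = fromBlocks (fromBlocks H 0 0 W) (fromRows Juᵀ Jρᵀ) (fromCols Ju 0) 0) :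
    (∀ μ ∈ spectrum ℂ ((At⁻¹ * A).map (Complex.ofReal : ℝ → ℂ)),
      μ.im = 0 ∧ 1 ≤ μ.re ∧
        (μ = 1 ∨ ∃ ν ∈ spectrum ℝ (W⁻¹ * ((Ju⁻¹ * Jρ)ᵀ * H * (Ju⁻¹ * Jρ))),
          μ = 1 + (ν : ℂ))) ∧
    2 * nu ≤ (Matrix.charpoly (At⁻¹ * A)).rootMultiplicity 1 := by
  set Hd := (Ju⁻¹ * Jρ)ᵀ * H * (Ju⁻¹ * Jρ)
  have hWdet : IsUnit W.det := isUnit_iff_ne_zero.mpr hW.det_pos.ne'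
  have hchar : (At⁻¹ * A).charpoly = (X - 1) ^ (2 * nu) * (1 + W⁻¹ * Hd).charpoly := by
    rw [hA, hAt, gaussSeidel_inv_mul_saddlePoint H Ju W Jρ hJu hWdet, charpoly_fromBlocks_one,
      Fintype.card_fin, two_mul]
  refine ⟨fun μ hμ => ?_, (le_rootMultiplicity_iff (charpoly_monic _).ne_zero).mpr
    ⟨_, by rw [hchar, C_1]⟩⟩
  have hcharℂ := congrArg (Polynomial.map Complex.ofRealHom) hchar
  rw [Polynomial.map_mul, Polynomial.map_pow, Polynomial.map_sub, Polynomial.map_X,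
    Polynomial.map_one, ← charpoly_map_ofReal, ← charpoly_map_ofReal] at hcharℂ
  rcases mem_spectrum_of_charpoly_eq_mul hcharℂ hμ with rfl | hμ
  · simp
  rw [show (1 + W⁻¹ * Hd).map Complex.ofReal = algebraMap ℂ _ 1 + (W⁻¹ * Hd).map Complex.ofReal
    by simp [Matrix.map_add], ← spectrum.singleton_add_eq, Set.singleton_add] at hμ
  obtain ⟨ν', hν', rfl⟩ := hμ
  have hHd : Hd.PosSemidef := by
    simpa only [conjTranspose_eq_transpose_of_trivial] using
      hH.conjTranspose_mul_mul_same (Ju⁻¹ * Jρ)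
  obtain ⟨ν, hν, hν0, rfl⟩ :=
    hW.exists_nonneg_of_mem_spectrum_map_ofReal hHd (mul_nonsing_inv_cancel_left _ _ hWdet) hν'
  exact ⟨by simp, by simpa using hν0, .inr ⟨ν, hν, rfl⟩⟩
end

section
/- Suppose the preconditioned matrix M = Ã^{-1}A is diagonalizable as M = Y D Y^{-1} with eigenvalues λ_j, and that at most n_ρ eigenvalues differ from 1: specifically λ_j = 1 + ν_j for j ≤ n_ρ with ν_j ≥ 0 decreasing, and λ_j = 1 otherwise. Then for any k ≤ n_ρ, the GMRES min-max quantity satisfies min over polynomials p of degree ≤ k with p(0)=1 of max_j |p(λ_j)| ≤ ∏_{j=1}^{k} ν_j/(1+ν_j); in particular, taking q(λ) = ∏_{j=1}^{k}(1 - λ/λ_j), one has max over all eigenvalues λ_i of |q(λ_i)| ≤ ∏_{j=1}^{k} ν_j/(1+ν_j). -/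
open Matrix Polynomial Finset

/-- GMRES polynomial bound: if the eigenvalues `lam i` of the preconditioned matrix are
all equal to `1` or of the form `1 + ν j` with `ν` nonnegative and decreasing, then for
`q(λ) = ∏_{j<k} (1 - λ/(1+ν j))` one has `q` of degree `≤ k`, `q(0) = 1`, and
`|q(lam i)| ≤ ∏_{j<k} ν j/(1+ν j)` for every eigenvalue; in particular the minimum over
polynomials `p` of degree `≤ k` with `p(0)=1` of `max_i |p(lam i)|` is bounded by
`∏_{j<k} ν j/(1+ν j)`. -/
theorem stmt10 {nρ : ℕ} {ι : Type*} [Fintype ι] (lam : ι → ℝ) (ν : Fin nρ → ℝ)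
    (hνanti : Antitone ν) (hν0 : ∀ j, 0 ≤ ν j)
    (hlam : ∀ i, lam i = 1 ∨ ∃ j : Fin nρ, lam i = 1 + ν j)
    (k : ℕ) (hk : k ≤ nρ)
    (P : Polynomial ℝ)
    (hP : P = ∏ j ∈ univ.filter (fun j : Fin nρ => (j : ℕ) < k),
      (1 - Polynomial.C (1 + ν j)⁻¹ * Polynomial.X)) :
    P.natDegree ≤ k ∧ P.eval 0 = 1 ∧
    (∀ i, |P.eval (lam i)| ≤
      ∏ j ∈ univ.filter (fun j : Fin nρ => (j : ℕ) < k), ν j / (1 + ν j)) ∧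
    ∃ p : Polynomial ℝ, p.natDegree ≤ k ∧ p.eval 0 = 1 ∧
      ∀ i, |p.eval (lam i)| ≤
        ∏ j ∈ univ.filter (fun j : Fin nρ => (j : ℕ) < k), ν j / (1 + ν j) := by
  have hpos : ∀ j : Fin nρ, (0:ℝ) < 1 + ν j := fun j => by linarith [hν0 j]
  set s := univ.filter (fun j : Fin nρ => (j : ℕ) < k) with hs
  have heval : ∀ x : ℝ, P.eval x = ∏ j ∈ s, (1 - (1 + ν j)⁻¹ * x) := by
    intro x; simp [hP, eval_prod]
  have hT0 : (0:ℝ) ≤ ∏ j ∈ s, ν j / (1 + ν j) :=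
    Finset.prod_nonneg fun j _ => div_nonneg (hν0 j) (hpos j).le
  have hdeg : P.natDegree ≤ k := by
    have hcard : s.card ≤ k := by
      have h : s.card ≤ (Finset.range k).card := by
        refine Finset.card_le_card_of_injOn (fun j : Fin nρ => (j : ℕ)) ?_ ?_
        · intro j hj
          rw [hs, Finset.mem_coe, Finset.mem_filter] at hj
          exact Finset.mem_range.mpr hj.2
        · intro a _ b _ h; exact Fin.ext h
      simpa using h
    calc P.natDegree ≤ ∑ j ∈ s, (1 - Polynomial.C (1 + ν j)⁻¹ * Polynomial.X).natDegree := by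
          rw [hP]; exact Polynomial.natDegree_prod_le _ _
      _ ≤ ∑ _j ∈ s, 1 := by
          apply Finset.sum_le_sum; intro j _
          refine le_trans (Polynomial.natDegree_sub_le _ _) ?_
          simp only [Polynomial.natDegree_one, max_le_iff]
          exact ⟨Nat.zero_le _, le_trans (Polynomial.natDegree_C_mul_le _ _)
            Polynomial.natDegree_X_le⟩
      _ ≤ k := by simpa using hcard
  have heval0 : P.eval 0 = 1 := by simp [heval 0]
  have hmain : ∀ i, |P.eval (lam i)| ≤ ∏ j ∈ s, ν j / (1 + ν j) := by
    intro i
    rcases hlam i with h1 | ⟨j₀, hj₀⟩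
    · rw [h1, heval]
      have : ∏ j ∈ s, (1 - (1 + ν j)⁻¹ * 1) = ∏ j ∈ s, ν j / (1 + ν j) := by
        apply Finset.prod_congr rfl; intro j _
        rw [mul_one, eq_div_iff (hpos j).ne', sub_mul, one_mul,
          inv_mul_cancel₀ (hpos j).ne']; ring
      rw [this, abs_of_nonneg hT0]
    · rw [hj₀, heval]
      by_cases hjk : (j₀ : ℕ) < k
      · have hmem : j₀ ∈ s := by simp [hs, hjk]
        rw [Finset.prod_eq_zero hmem (by rw [inv_mul_cancel₀ (hpos j₀).ne', sub_self])]
        simpa using hT0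
      · have hle : ∀ j ∈ s, ν j₀ ≤ ν j := by
          intro j hj
          simp only [hs, mem_filter] at hj
          exact hνanti (Fin.le_def.mpr (by omega))
        have key : ∀ j ∈ s, 0 ≤ 1 - (1 + ν j)⁻¹ * (1 + ν j₀) ∧
            1 - (1 + ν j)⁻¹ * (1 + ν j₀) ≤ ν j / (1 + ν j) := by
          intro j hj
          have h1 := hle j hj
          have h2 := hpos j
          have hinv : (0:ℝ) < (1 + ν j)⁻¹ := inv_pos.2 h2
          have hc : (1 + ν j)⁻¹ * (1 + ν j) = 1 := inv_mul_cancel₀ h2.ne'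
          constructor
          · nlinarith
          · rw [div_eq_mul_inv]
            nlinarith [mul_nonneg (hν0 j₀) hinv.le]
        rw [abs_of_nonneg (Finset.prod_nonneg fun j hj => (key j hj).1)]
        exact Finset.prod_le_prod (fun j hj => (key j hj).1) (fun j hj => (key j hj).2)
  exact ⟨hdeg, heval0, hmain, P, hdeg, heval0, hmain⟩
end

section
/- Let A = [[H_uu, 0, Jᵤᵀ],[0, W, J_ρᵀ],[Jᵤ, J_ρ, 0]] with Jᵤ invertible, H_uu symmetric positive semidefinite and W symmetric positive definite. Then A is invertible. -/
/-!
For a kernel vector `(x, y)` of a saddle-point matrix `[[A, Bᵀ], [B, 0]]` the equations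
`A x + Bᵀ y = 0` and `B x = 0` give `xᵀ A x = -(B x)ᵀ y = 0`. Here `A = diag(H, W)` and
`B = [Jᵤ J_ρ]`, so with `x = (u, ρ)` this reads `uᵀ H u + ρᵀ W ρ = 0`; positivity forces `ρ = 0`,
then `Jᵤ u = 0` forces `u = 0`, and finally `Jᵤᵀ y = 0` forces `y = 0`.
-/

open Matrix

theorem isUnit_det_fromBlocks_saddlePoint {K m n : Type*} [Field K] [Fintype m] [Fintype n]
    [DecidableEq m] [DecidableEq n] (A : Matrix n n K) (B : Matrix m n K)
    (hB : ∀ y, y ᵥ* B = 0 → y = 0)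
    (hA : ∀ x, B *ᵥ x = 0 → x ⬝ᵥ A *ᵥ x = 0 → x = 0) :
    IsUnit (fromBlocks A Bᵀ B 0).det := by
  rw [isUnit_iff_ne_zero, Ne, ← exists_mulVec_eq_zero_iff]
  rintro ⟨v, hv0, hv⟩
  obtain ⟨x, y, rfl⟩ : ∃ x y, v = Sum.elim x y := ⟨_, _, (Sum.elim_comp_inl_inr v).symm⟩
  rw [fromBlocks_mulVec, Sum.elim_comp_inl, Sum.elim_comp_inr, zero_mulVec, add_zero,
    mulVec_transpose, ← Sum.elim_zero_zero, Sum.elim_eq_iff] at hv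
  obtain ⟨hxy, hx⟩ := hv
  have hxAx : x ⬝ᵥ A *ᵥ x = 0 := by
    have h := congrArg (x ⬝ᵥ ·) hxy
    rwa [dotProduct_add, dotProduct_comm x (y ᵥ* B), ← dotProduct_mulVec, hx, dotProduct_zero,
      add_zero, dotProduct_zero] at h
  have hx0 : x = 0 := hA x hx hxAx
  have hy0 : y = 0 := hB y (by rwa [hx0, mulVec_zero, zero_add] at hxy)
  exact hv0 (by rw [hx0, hy0, Sum.elim_zero_zero])

theorem eq_zero_of_vecMul_fromCols_eq_zero {K m n : Type*} [Field K] [Fintype m]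
    [DecidableEq m] {J : Matrix m m K} (C : Matrix m n K) (hJ : J.det ≠ 0) {y : m → K}
    (hy : y ᵥ* fromCols J C = 0) : y = 0 := by
  rw [vecMul_fromCols, ← Sum.elim_zero_zero, Sum.elim_eq_iff] at hy
  exact eq_zero_of_vecMul_eq_zero hJ hy.1

theorem eq_zero_of_fromCols_mulVec_eq_zero_of_dotProduct_fromBlocks_eq_zero
    {m n : Type*} [Fintype m] [Fintype n] [DecidableEq m] {H J : Matrix m m ℝ}
    {W : Matrix n n ℝ} (C : Matrix m n ℝ) (hH : H.PosSemidef) (hW : W.PosDef)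
    (hJ : J.det ≠ 0) {x : m ⊕ n → ℝ} (hx : fromCols J C *ᵥ x = 0)
    (hxAx : x ⬝ᵥ fromBlocks H 0 0 W *ᵥ x = 0) : x = 0 := by
  obtain ⟨u, ρ, rfl⟩ : ∃ u ρ, x = Sum.elim u ρ := ⟨_, _, (Sum.elim_comp_inl_inr x).symm⟩
  rw [fromBlocks_mulVec, Sum.elim_comp_inl, Sum.elim_comp_inr, zero_mulVec, zero_mulVec,
    add_zero, zero_add, sumElim_dotProduct_sumElim] at hxAx
  rw [fromCols_mulVec_sumElim] at hx
  have hρ : ρ = 0 := by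
    by_contra hρ
    have hWρ := hW.dotProduct_mulVec_pos hρ
    have hHu := hH.dotProduct_mulVec_nonneg u
    simp only [star_trivial] at hWρ hHu
    linarith
  have hu : u = 0 := eq_zero_of_mulVec_eq_zero hJ (by rwa [hρ, mulVec_zero, add_zero] at hx)
  rw [hu, hρ, Sum.elim_zero_zero]

/-- The IP-Gauss-Newton saddle-point matrix
`A = [[H,0,Jᵤᵀ],[0,W,J_ρᵀ],[Jᵤ,J_ρ,0]]` with `Jᵤ` invertible, `H` symmetric positive
semidefinite and `W` symmetric positive definite, is invertible. -/
theorem stmt17 {nu nρ : ℕ}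
    (H Ju : Matrix (Fin nu) (Fin nu) ℝ) (W : Matrix (Fin nρ) (Fin nρ) ℝ)
    (Jρ : Matrix (Fin nu) (Fin nρ) ℝ)
    (hH : H.PosSemidef) (hW : W.PosDef) (hJu : IsUnit Ju.det) :
    IsUnit (fromBlocks (fromBlocks H 0 0 W) (fromRows Juᵀ Jρᵀ)
      (fromCols Ju Jρ) 0).det := by
  rw [← transpose_fromCols]
  exact isUnit_det_fromBlocks_saddlePoint _ _
    (fun _ ↦ eq_zero_of_vecMul_fromCols_eq_zero Jρ hJu.ne_zero)
    (fun _ ↦ eq_zero_of_fromCols_mulVec_eq_zero_of_dotProduct_fromBlocks_eq_zero Jρ hH hW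
      hJu.ne_zero)
end

section
/- Let G = [[I, N],[0, K]] be block upper triangular where K is an n×n matrix whose minimal polynomial has degree d. Then the minimal polynomial of G divides (x-1)·m_K(x) where m_K is the minimal polynomial of K; in particular if K = I + R with R of rank r, then GMRES applied to G converges in at most r + 2 iterations in exact arithmetic (the minimal polynomial of G has degree at most r + 2). -/
open Matrix Polynomial

private lemma pow_fromBlocks_aux {m n : ℕ} (N : Matrix (Fin m) (Fin n) ℝ)
    (K : Matrix (Fin n) (Fin n) ℝ) (k : ℕ) :
    ∃ B, (fromBlocks 1 N (0 : Matrix (Fin n) (Fin m) ℝ) K) ^ k = fromBlocks 1 B 0 (K ^ k) := by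
  induction k with
  | zero => exact ⟨0, by rw [pow_zero, pow_zero, ← Matrix.fromBlocks_one]⟩
  | succ k ih =>
    obtain ⟨B, hB⟩ := ih
    refine ⟨N + B * K, ?_⟩
    rw [pow_succ, hB, Matrix.fromBlocks_multiply, pow_succ]
    congr 1 <;> simp

private lemma aeval_fromBlocks_aux {m n : ℕ} (N : Matrix (Fin m) (Fin n) ℝ)
    (K : Matrix (Fin n) (Fin n) ℝ) (p : ℝ[X]) :
    ∃ A B, aeval (fromBlocks 1 N (0 : Matrix (Fin n) (Fin m) ℝ) K) p
      = fromBlocks A B 0 (aeval K p) := by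
  induction p using Polynomial.induction_on' with
  | add p q hp hq =>
    obtain ⟨A, B, hAB⟩ := hp
    obtain ⟨A', B', hAB'⟩ := hq
    refine ⟨A + A', B + B', ?_⟩
    rw [map_add, map_add, hAB, hAB', Matrix.fromBlocks_add, add_zero]
  | monomial k a =>
    obtain ⟨B, hB⟩ := pow_fromBlocks_aux N K k
    refine ⟨a • 1, a • B, ?_⟩
    rw [aeval_monomial, aeval_monomial, hB, ← Algebra.smul_def, ← Algebra.smul_def,
      Matrix.fromBlocks_smul, smul_zero]

private lemma minpoly_one_add_aux {V : Type*} [AddCommGroup V] [Module ℝ V]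
    [FiniteDimensional ℝ V] (g : V →ₗ[ℝ] V) :
    (minpoly ℝ (1 + g)).natDegree ≤ Module.finrank ℝ (LinearMap.range g) + 1 := by
  set f : V →ₗ[ℝ] V := 1 + g with hf
  set W := LinearMap.range g with hWdef
  have hW : ∀ x ∈ W, f x ∈ W := by
    intro x hx
    have : f x = x + g x := by simp [hf]
    rw [this]
    exact W.add_mem hx (LinearMap.mem_range_self g x)
  set f' := f.restrict hW with hf'
  have hint' : IsIntegral ℝ f' := IsIntegral.of_finite ℝ f'
  have hne' : minpoly ℝ f' ≠ 0 := minpoly.ne_zero hint'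
  have hdeg : (minpoly ℝ f').natDegree ≤ Module.finrank ℝ W := by
    have h1 := LinearMap.minpoly_dvd_charpoly f'
    have h2 := Polynomial.natDegree_le_of_dvd h1 (LinearMap.charpoly_monic f').ne_zero
    rwa [LinearMap.charpoly_natDegree] at h2
  have key : ∀ (q : ℝ[X]) (w : V) (hw : w ∈ W), aeval f q w = (aeval f' q ⟨w, hw⟩ : V) := by
    intro q
    induction q using Polynomial.induction_on' with
    | add p q hp hq =>
      intro w hw
      simp only [map_add, LinearMap.add_apply, hp w hw, hq w hw, Submodule.coe_add]
    | monomial k a =>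
      intro w hw
      rw [aeval_monomial, aeval_monomial]
      have hpow : f' ^ k = (f ^ k).restrict _ := Module.End.pow_restrict k hW
      simp only [Module.End.mul_apply, Module.algebraMap_end_apply, hpow,
        LinearMap.restrict_apply, SetLike.val_smul]
  have hz : aeval f (minpoly ℝ f' * (X - C 1)) = 0 := by
    ext v
    have hbv : (aeval f (X - C 1 : ℝ[X])) v = g v := by
      simp [_root_.map_sub, aeval_X, aeval_C, hf]
    rw [_root_.map_mul]
    have : (aeval f (minpoly ℝ f') * aeval f (X - C 1 : ℝ[X])) v
        = aeval f (minpoly ℝ f') ((aeval f (X - C 1 : ℝ[X])) v) := rfl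
    rw [this, hbv, key _ _ (LinearMap.mem_range_self g v), minpoly.aeval]
    simp
  have hXC : (X - C (1:ℝ)) ≠ 0 := Polynomial.X_sub_C_ne_zero 1
  have hdvd := minpoly.dvd ℝ f hz
  have hle := Polynomial.natDegree_le_of_dvd hdvd (mul_ne_zero hne' hXC)
  rw [Polynomial.natDegree_mul hne' hXC, Polynomial.natDegree_X_sub_C] at hle
  exact hle.trans (by omega)

private lemma minpoly_matrix_rank_aux {n : ℕ} (K R : Matrix (Fin n) (Fin n) ℝ)
    (hKR : K = 1 + R) : (minpoly ℝ K).natDegree ≤ R.rank + 1 := by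
  have he : minpoly ℝ K = minpoly ℝ (Matrix.toLinAlgEquiv' K) :=
    (minpoly.algEquiv_eq _ _).symm
  have hK : Matrix.toLinAlgEquiv' K = 1 + Matrix.toLinAlgEquiv' R := by
    rw [hKR, map_add, _root_.map_one]
  have hR : Matrix.toLinAlgEquiv' R = R.mulVecLin := by
    ext v i
    simp [Matrix.toLinAlgEquiv'_apply, Matrix.mulVecLin_apply]
  have := minpoly_one_add_aux (Matrix.toLinAlgEquiv' R)
  rw [he, hK]
  rw [hR] at this
  exact this

/-- For the block upper-triangular matrix `G = [[I, N],[0, K]]`, the minimal polynomial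
of `G` divides `(x - 1) · m_K(x)` where `m_K` is the minimal polynomial of `K`; in
particular if `K = I + R` with `rank R = r`, then the minimal polynomial of `G` has
degree at most `r + 2` (so GMRES applied to `G` converges in at most `r + 2` iterations
in exact arithmetic). -/
theorem stmt19 {m n : ℕ} (N : Matrix (Fin m) (Fin n) ℝ)
    (K : Matrix (Fin n) (Fin n) ℝ) :
    minpoly ℝ (fromBlocks 1 N (0 : Matrix (Fin n) (Fin m) ℝ) K) ∣ (X - C 1) * minpoly ℝ K ∧
    ∀ R : Matrix (Fin n) (Fin n) ℝ, K = 1 + R →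
      (minpoly ℝ (fromBlocks 1 N (0 : Matrix (Fin n) (Fin m) ℝ) K)).natDegree ≤ R.rank + 2 := by
  set G := fromBlocks 1 N (0 : Matrix (Fin n) (Fin m) ℝ) K with hG
  have hz : aeval G ((X - C 1) * minpoly ℝ K) = 0 := by
    obtain ⟨A, B, hAB⟩ := aeval_fromBlocks_aux N K (minpoly ℝ K)
    rw [minpoly.aeval] at hAB
    have hG1 : aeval G (X - C 1 : ℝ[X]) = fromBlocks 0 N 0 (K - 1) := by
      rw [_root_.map_sub, aeval_X, aeval_C]
      rw [RingHom.map_one, hG]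
      ext (i | i) (j | j) <;> simp [Matrix.fromBlocks, Matrix.one_apply]
    rw [_root_.map_mul, hG1, hAB, Matrix.fromBlocks_multiply]
    simp
  have hdvd := minpoly.dvd ℝ G hz
  refine ⟨hdvd, fun R hKR => ?_⟩
  have hmono : minpoly ℝ K ≠ 0 := minpoly.ne_zero (IsIntegral.of_finite ℝ K)
  have hXC : (X - C (1:ℝ)) ≠ 0 := Polynomial.X_sub_C_ne_zero 1
  have hle := Polynomial.natDegree_le_of_dvd hdvd (mul_ne_zero hXC hmono)
  rw [Polynomial.natDegree_mul hXC hmono, Polynomial.natDegree_X_sub_C] at hle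
  have := minpoly_matrix_rank_aux K R hKR
  omega
end
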